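/- arXiv:1302.3102 — 6 statements merged into one kernel-verified Lean document; each statement's English description precedes it below -/
import Mathlib

section
/- The automorphisms σ_1, …, σ_r and ρ of R satisfy: (i) σ_i ∘ σ_i = id for all 1 ≤ i ≤ r; (ii) σ_i ∘ σ_j = σ_j ∘ σ_i whenever j ≢ i ± 1 (mod r); (iii) σ_i ∘ σ_{i+1} ∘ σ_i = σ_{i+1} ∘ σ_i ∘ σ_{i+1} for all 1 ≤ i ≤ r (subscripts mod r); (iv) ρ ∘ σ_i ∘ ρ^{−1} = σ_{i+1} for all 1 ≤ i ≤ r (subscripts mod r). Thus these automorphisms satisfy the defining relations of the extended affine Weyl group of type Â_{r−1}. -/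
open MvPolynomial

section Aux

variable {r : ℕ} [NeZero r]

private lemma weyl_aux1 (hr : 3 ≤ r) : (1 : Fin r) ≠ 0 := by
  have h1 : (1 : Fin r).val = 1 := Fin.val_one' r |>.trans (Nat.mod_eq_of_lt (by omega))
  intro h; rw [Fin.ext_iff, h1] at h; simp at h

private lemma weyl_aux2 (hr : 3 ≤ r) : (1 : Fin r) + 1 ≠ 0 := by
  have h1 : (1 : Fin r).val = 1 := Fin.val_one' r |>.trans (Nat.mod_eq_of_lt (by omega))
  intro h; rw [Fin.ext_iff, Fin.val_add, h1, Nat.mod_eq_of_lt (by omega)] at h; simp at h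

private lemma weyl_add_one_ne (hr : 3 ≤ r) (i : Fin r) : i + 1 ≠ i := by
  intro h
  have h' : i + 1 = i + 0 := by rw [add_zero]; exact h
  exact weyl_aux1 hr (add_left_cancel h')

private lemma weyl_add_two_ne (hr : 3 ≤ r) (i : Fin r) : i + 1 + 1 ≠ i := by
  intro h
  rw [add_assoc] at h
  have h' : i + (1 + 1) = i + 0 := by rw [add_zero]; exact h
  exact weyl_aux2 hr (add_left_cancel h')

private lemma weyl_ext {τ : Type*} {f g : MvPolynomial τ ℚ ≃ₐ[ℚ] MvPolynomial τ ℚ}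
    (h : ∀ v, f (X v) = g (X v)) : f = g := by
  have := MvPolynomial.algHom_ext (f := f.toAlgHom) (g := g.toAlgHom) h
  exact AlgEquiv.ext fun p => AlgHom.congr_fun this p

end Aux

/-- The automorphisms σ_1, …, σ_r and ρ of R = ℚ[y, x_1, …, x_r] satisfy the
defining relations of the extended affine Weyl group of type Â_{r−1}.
Variables are indexed by `Option (Fin r)`: `none` is `y` and `some i` is `x_{i+1}` (0-indexed).
Subscripts are read cyclically: `i + 1 = 0` in `Fin r` exactly when `i` is the last index. -/
theorem stmt_0 (r : ℕ) (hr : 3 ≤ r) [NeZero r]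
    (σ : Fin r → (MvPolynomial (Option (Fin r)) ℚ ≃ₐ[ℚ] MvPolynomial (Option (Fin r)) ℚ))
    (ρ : MvPolynomial (Option (Fin r)) ℚ ≃ₐ[ℚ] MvPolynomial (Option (Fin r)) ℚ)
    (hσy : ∀ i : Fin r, σ i (X none) = X none)
    (hσself : ∀ i : Fin r, σ i (X (some i)) =
      X (some (i + 1)) - (if i + 1 = 0 then X none else 0))
    (hσnext : ∀ i : Fin r, σ i (X (some (i + 1))) =
      X (some i) + (if i + 1 = 0 then X none else 0))
    (hσother : ∀ i j : Fin r, j ≠ i → j ≠ i + 1 → σ i (X (some j)) = X (some j))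
    (hρy : ρ (X none) = X none)
    (hρx : ∀ i : Fin r, ρ (X (some i)) =
      X (some (i + 1)) - (if i + 1 = 0 then X none else 0)) :
    (∀ i : Fin r, σ i * σ i = 1) ∧
    (∀ i j : Fin r, j ≠ i + 1 → i ≠ j + 1 → σ i * σ j = σ j * σ i) ∧
    (∀ i : Fin r, σ i * σ (i + 1) * σ i = σ (i + 1) * σ i * σ (i + 1)) ∧
    (∀ i : Fin r, ρ * σ i * ρ⁻¹ = σ (i + 1)) := by
  refine ⟨?rel1, ?rel2, ?rel3, ?rel4⟩
  case rel1 =>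
    intro i
    apply weyl_ext
    rintro (_ | k)
    · simp only [AlgEquiv.mul_apply, AlgEquiv.one_apply, hσy]
    rcases eq_or_ne k i with hk | hki
    · rw [hk]
      simp only [AlgEquiv.mul_apply, AlgEquiv.one_apply, hσself, map_sub, map_add, hσnext,
        apply_ite (⇑(σ i)), hσy, map_zero]
      ring
    rcases eq_or_ne k (i + 1) with hk | hki1
    · rw [hk]
      simp only [AlgEquiv.mul_apply, AlgEquiv.one_apply, hσself, map_sub, map_add, hσnext,
        apply_ite (⇑(σ i)), hσy, map_zero]
      ring
    · simp only [AlgEquiv.mul_apply, AlgEquiv.one_apply, hσother i k hki hki1]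
  case rel2 =>
    intro i j h1 h2
    rcases eq_or_ne i j with rfl | hij
    · rfl
    have hji : j ≠ i := hij.symm
    have hi1j : i + 1 ≠ j := h1.symm
    have hj1i : j + 1 ≠ i := h2.symm
    have hi1j1 : i + 1 ≠ j + 1 := fun h => hij (add_right_cancel h)
    have hj1i1 : j + 1 ≠ i + 1 := hi1j1.symm
    apply weyl_ext
    rintro (_ | k)
    · simp only [AlgEquiv.mul_apply, hσy]
    rcases eq_or_ne k i with hk | hki
    · rw [hk]
      simp only [AlgEquiv.mul_apply, map_sub, map_add, hσself, hσnext,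
        apply_ite (⇑(σ i)), apply_ite (⇑(σ j)), hσy, map_zero,
        hσother j i hij h2, hσother j (i + 1) hi1j hi1j1]
    rcases eq_or_ne k (i + 1) with hk | hki1
    · rw [hk]
      simp only [AlgEquiv.mul_apply, map_sub, map_add, hσself, hσnext,
        apply_ite (⇑(σ i)), apply_ite (⇑(σ j)), hσy, map_zero,
        hσother j i hij h2, hσother j (i + 1) hi1j hi1j1]
    rcases eq_or_ne k j with hk | hkj
    · rw [hk]
      simp only [AlgEquiv.mul_apply, map_sub, map_add, hσself, hσnext,
        apply_ite (⇑(σ i)), apply_ite (⇑(σ j)), hσy, map_zero,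
        hσother i j hji h1, hσother i (j + 1) hj1i hj1i1]
    rcases eq_or_ne k (j + 1) with hk | hkj1
    · rw [hk]
      simp only [AlgEquiv.mul_apply, map_sub, map_add, hσself, hσnext,
        apply_ite (⇑(σ i)), apply_ite (⇑(σ j)), hσy, map_zero,
        hσother i j hji h1, hσother i (j + 1) hj1i hj1i1]
    · simp only [AlgEquiv.mul_apply, hσother i k hki hki1, hσother j k hkj hkj1]
  case rel3 =>
    intro i
    have n1 : i + 1 ≠ i := weyl_add_one_ne hr i
    have n2 : i + 1 + 1 ≠ i := weyl_add_two_ne hr i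
    have n3 : i + 1 + 1 ≠ i + 1 := weyl_add_one_ne hr (i + 1)
    apply weyl_ext
    rintro (_ | k)
    · simp only [AlgEquiv.mul_apply, hσy]
    rcases eq_or_ne k i with hk | hki
    · rw [hk]
      simp only [AlgEquiv.mul_apply, map_sub, map_add, hσself, hσnext,
        apply_ite (⇑(σ i)), apply_ite (⇑(σ (i + 1))), hσy, map_zero,
        hσother (i + 1) i n1.symm n2.symm, hσother i (i + 1 + 1) n2 n3]
    rcases eq_or_ne k (i + 1) with hk | hki1
    · rw [hk]
      simp only [AlgEquiv.mul_apply, map_sub, map_add, hσself, hσnext,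
        apply_ite (⇑(σ i)), apply_ite (⇑(σ (i + 1))), hσy, map_zero,
        hσother (i + 1) i n1.symm n2.symm, hσother i (i + 1 + 1) n2 n3]
      ring
    rcases eq_or_ne k (i + 1 + 1) with hk | hki2
    · rw [hk]
      simp only [AlgEquiv.mul_apply, map_sub, map_add, hσself, hσnext,
        apply_ite (⇑(σ i)), apply_ite (⇑(σ (i + 1))), hσy, map_zero,
        hσother (i + 1) i n1.symm n2.symm, hσother i (i + 1 + 1) n2 n3]
    · simp only [AlgEquiv.mul_apply, hσother i k hki hki1, hσother (i + 1) k hki1 hki2]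
  case rel4 =>
    intro i
    rw [mul_inv_eq_iff_eq_mul]
    apply weyl_ext
    rintro (_ | k)
    · simp only [AlgEquiv.mul_apply, hσy, hρy]
    rcases eq_or_ne k i with hk | hki
    · rw [hk]
      simp only [AlgEquiv.mul_apply, map_sub, map_add, hσself, hσnext, hρx,
        apply_ite (⇑ρ), apply_ite (⇑(σ (i + 1))), hσy, hρy, map_zero]
    rcases eq_or_ne k (i + 1) with hk | hki1
    · rw [hk]
      simp only [AlgEquiv.mul_apply, map_sub, map_add, hσself, hσnext, hρx,
        apply_ite (⇑ρ), apply_ite (⇑(σ (i + 1))), hσy, hρy, map_zero]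
      ring
    · have hk1 : k + 1 ≠ i + 1 := fun h => hki (add_right_cancel h)
      have hk2 : k + 1 ≠ i + 1 + 1 := fun h => hki1 (add_right_cancel h)
      simp only [AlgEquiv.mul_apply, map_sub, map_add, hρx,
        apply_ite (⇑(σ (i + 1))), hσy, map_zero,
        hσother i k hki hki1, hσother (i + 1) (k + 1) hk1 hk2]
end

section
/- The fixed subalgebra R^{σ_r} = {p ∈ R : σ_r(p) = p} is equal to the ℚ-subalgebra of R generated by the elements y, x_2, …, x_{r−1}, x_r + x_1, and (x_r + y/2)·(x_1 − y/2). -/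
open MvPolynomial

lemma fixed_core {ι : Type*} (σ : MvPolynomial ι ℚ ≃ₐ[ℚ] MvPolynomial ι ℚ)
    (G : Set (MvPolynomial ι ℚ)) (u v : MvPolynomial ι ℚ)
    (huv : u ≠ v) (hσu : σ u = v)
    (hfix : ∀ g ∈ G, σ g = g)
    (he1 : u + v ∈ Algebra.adjoin ℚ G)
    (he2 : u * v ∈ Algebra.adjoin ℚ G)
    (hgen : ∀ i : ι, X i ∈ Algebra.adjoin ℚ (G ∪ {u})) :
    {p | σ p = p} = (Algebra.adjoin ℚ G : Set (MvPolynomial ι ℚ)) := by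
  have Bfix : ∀ p ∈ Algebra.adjoin ℚ G, σ p = p := by
    intro p hp
    induction hp using Algebra.adjoin_induction with
    | mem x hx => exact hfix x hx
    | algebraMap q => exact σ.commutes q
    | add x y hx hy px py => rw [map_add, px, py]
    | mul x y hx hy px py => rw [map_mul, px, py]
  have key : ∀ p : MvPolynomial ι ℚ, ∃ f g, f ∈ Algebra.adjoin ℚ G ∧
      g ∈ Algebra.adjoin ℚ G ∧ p = f + g * u := by
    intro p
    have hp : p ∈ Algebra.adjoin ℚ (G ∪ {u}) := by
      have hle : (⊤ : Subalgebra ℚ (MvPolynomial ι ℚ)) ≤ Algebra.adjoin ℚ (G ∪ {u}) := by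
        rw [← MvPolynomial.adjoin_range_X, Algebra.adjoin_le_iff]
        rintro _ ⟨i, rfl⟩
        exact hgen i
      exact hle trivial
    induction hp using Algebra.adjoin_induction with
    | mem x hx =>
      rcases hx with hx | hx
      · exact ⟨x, 0, Algebra.subset_adjoin hx, Subalgebra.zero_mem _, by ring⟩
      · rcases hx with rfl
        exact ⟨0, 1, Subalgebra.zero_mem _, Subalgebra.one_mem _, by ring⟩
    | algebraMap q =>
      exact ⟨algebraMap ℚ _ q, 0, Subalgebra.algebraMap_mem _ q, Subalgebra.zero_mem _, by ring⟩
    | add x y hx hy px py =>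
      obtain ⟨f1, g1, hf1, hg1, rfl⟩ := px
      obtain ⟨f2, g2, hf2, hg2, rfl⟩ := py
      exact ⟨f1 + f2, g1 + g2, add_mem hf1 hf2, add_mem hg1 hg2, by ring⟩
    | mul x y hx hy px py =>
      obtain ⟨f1, g1, hf1, hg1, rfl⟩ := px
      obtain ⟨f2, g2, hf2, hg2, rfl⟩ := py
      refine ⟨f1 * f2 - g1 * g2 * (u * v), f1 * g2 + g1 * f2 + g1 * g2 * (u + v),
        sub_mem (mul_mem hf1 hf2) (mul_mem (mul_mem hg1 hg2) he2),
        add_mem (add_mem (mul_mem hf1 hg2) (mul_mem hg1 hf2)) (mul_mem (mul_mem hg1 hg2) he1),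
        by ring⟩
  ext p
  simp only [Set.mem_setOf_eq, SetLike.mem_coe]
  constructor
  · intro hfp
    obtain ⟨f, g, hf, hg, rfl⟩ := key p
    have hσ : f + g * v = f + g * u := by
      conv_rhs => rw [← hfp]
      rw [map_add, map_mul, Bfix f hf, Bfix g hg, hσu]
    have h0 : g * (u - v) = 0 := by linear_combination -hσ
    rcases mul_eq_zero.mp h0 with hg0 | huv0
    · rw [hg0]; simpa using hf
    · exact absurd (sub_eq_zero.mp huv0) huv
  · exact Bfix p

theorem stmt_4 (r : ℕ) (hr : 3 ≤ r) [NeZero r]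
    (σr : MvPolynomial (Option (Fin r)) ℚ ≃ₐ[ℚ] MvPolynomial (Option (Fin r)) ℚ)
    (hy : σr (X none) = X none)
    (h1 : σr (X (some 0)) = X (some ⟨r - 1, by omega⟩) + X none)
    (hlast : σr (X (some ⟨r - 1, by omega⟩)) = X (some 0) - X none)
    (hother : ∀ j : Fin r, j ≠ 0 → j ≠ ⟨r - 1, by omega⟩ → σr (X (some j)) = X (some j)) :
    {p | σr p = p} =
      (Algebra.adjoin ℚ
        ({X none,
          X (some (⟨r - 1, by omega⟩ : Fin r)) + X (some 0),
          (X (some (⟨r - 1, by omega⟩ : Fin r)) + C (1/2 : ℚ) * X none) *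
            (X (some 0) - C (1/2 : ℚ) * X none)} ∪
          {p | ∃ j : Fin r, j ≠ 0 ∧ j ≠ ⟨r - 1, by omega⟩ ∧ p = X (some j)}) :
        Set (MvPolynomial (Option (Fin r)) ℚ)) := by
  classical
  have hrr : r - 1 < r := by omega
  let jr : Fin r := ⟨r - 1, hrr⟩
  have hjr0 : jr ≠ 0 := by
    intro h
    have h2 : r - 1 = 0 := by simpa [jr, Fin.ext_iff] using h
    omega
  let u : MvPolynomial (Option (Fin r)) ℚ := X (some jr) + C (1/2 : ℚ) * X none
  let v : MvPolynomial (Option (Fin r)) ℚ := X (some 0) - C (1/2 : ℚ) * X none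
  have hudef : u = X (some jr) + C (1/2 : ℚ) * X none := rfl
  have hvdef : v = X (some 0) - C (1/2 : ℚ) * X none := rfl
  have hC : ∀ q : ℚ, σr (C q) = (C q : MvPolynomial (Option (Fin r)) ℚ) := by
    intro q
    rw [← MvPolynomial.algebraMap_eq]
    exact σr.commutes q
  have hhalf : (C (1/2 : ℚ) : MvPolynomial (Option (Fin r)) ℚ) + C (1/2 : ℚ) = 1 := by
    rw [← C_add]
    norm_num
  have hσu : σr u = v := by
    rw [hudef, hvdef, map_add, map_mul, hlast, hC, hy]
    linear_combination (X none : MvPolynomial (Option (Fin r)) ℚ) * hhalf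
  have hσv : σr v = u := by
    rw [hudef, hvdef, map_sub, map_mul, h1, hC, hy]
    linear_combination (-(X none : MvPolynomial (Option (Fin r)) ℚ)) * hhalf
  have huv : u ≠ v := by
    intro h
    have := congrArg (eval (fun i : Option (Fin r) => if i = none then (1 : ℚ) else 0)) h
    simp [hudef, hvdef] at this
    norm_num at this
  let Gset : Set (MvPolynomial (Option (Fin r)) ℚ) :=
    {X none, X (some jr) + X (some 0), u * v} ∪
      {p | ∃ j : Fin r, j ≠ 0 ∧ j ≠ jr ∧ p = X (some j)}
  have hu_mem : u ∈ Algebra.adjoin ℚ (Gset ∪ {u}) :=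
    Algebra.subset_adjoin (Or.inr rfl)
  have hy_mem : (X none : MvPolynomial (Option (Fin r)) ℚ) ∈ Algebra.adjoin ℚ (Gset ∪ {u}) :=
    Algebra.subset_adjoin (Or.inl (Or.inl (Or.inl rfl)))
  have hc_mem : (C (1/2 : ℚ) * X none : MvPolynomial (Option (Fin r)) ℚ) ∈
      Algebra.adjoin ℚ (Gset ∪ {u}) := by
    rw [← MvPolynomial.algebraMap_eq]
    exact mul_mem (Subalgebra.algebraMap_mem _ _) hy_mem
  have he1_mem : (X (some jr) + X (some 0) : MvPolynomial (Option (Fin r)) ℚ) ∈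
      Algebra.adjoin ℚ (Gset ∪ {u}) :=
    Algebra.subset_adjoin (Or.inl (Or.inl (Or.inr (Or.inl rfl))))
  have hgen : ∀ i : Option (Fin r), (X i : MvPolynomial (Option (Fin r)) ℚ) ∈
      Algebra.adjoin ℚ (Gset ∪ {u}) := by
    rintro (_ | j)
    · exact hy_mem
    · by_cases hj0 : j = 0
      · subst hj0
        have hx : (X (some (0 : Fin r)) : MvPolynomial (Option (Fin r)) ℚ) =
            (X (some jr) + X (some 0)) - u + C (1/2 : ℚ) * X none := by
          rw [hudef]; ring
        rw [hx]
        exact add_mem (sub_mem he1_mem hu_mem) hc_mem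
      · by_cases hjr : j = jr
        · have hx : (X (some j) : MvPolynomial (Option (Fin r)) ℚ) =
              u - C (1/2 : ℚ) * X none := by rw [hjr, hudef]; ring
          rw [hx]
          exact sub_mem hu_mem hc_mem
        · exact Algebra.subset_adjoin (Or.inl (Or.inr ⟨j, hj0, hjr, rfl⟩))
  refine fixed_core σr Gset u v huv hσu ?_ ?_ ?_ hgen
  · rintro g (hg | hg)
    · rcases hg with rfl | rfl | rfl
      · exact hy
      · rw [map_add, hlast, h1]; ring
      · rw [map_mul, hσu, hσv]; ring
    · obtain ⟨j, hj0, hjr, rfl⟩ := hg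
      exact hother j hj0 hjr
  · have hx : u + v = X (some jr) + X (some 0) := by rw [hudef, hvdef]; ring
    rw [hx]
    exact Algebra.subset_adjoin (Or.inl (Or.inr (Or.inl rfl)))
  · exact Algebra.subset_adjoin (Or.inl (Or.inr (Or.inr rfl)))
end

section
/- Let (i_1, …, i_k) be a composition of r into positive integers. Then ρ^{i_k} maps R_{i_1⋯i_k} bijectively onto R_{i_k i_1⋯i_{k−1}}; that is, ρ^{i_k} restricts to a ℚ-algebra isomorphism R_{i_1⋯i_k} ≅ R_{i_k i_1⋯i_{k−1}}. -/
/-!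
Write `m = i_k` and let `e : i ↦ i + m` be the rotation of `ℤ/r` (0-indexed). Since `m ≤ r`,
`ρ^m x_i = x_{i+m} - [i + m ≥ r] y`, and `i + m ≥ r` exactly when `i` lies in the last block.
A permutation `τ` in the Young subgroup of `(i_1, …, i_k)` stabilises that block, hence
`ρ^m ∘ τ = (e τ e⁻¹) ∘ ρ^m`. On the other hand `e` carries the `j`-th block of `(i_1, …, i_k)`
onto the `(j+1)`-st block of `(i_k, i_1, …, i_{k-1})`, so `τ ↦ e τ e⁻¹` maps the first Young
subgroup onto the second. Hence `p` is fixed by the first group iff `ρ^m p` is fixed by the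
second, and `ρ^m` is bijective.
-/

open MvPolynomial Set
open Fin.NatCast

/-- Variables indexed by `Option (Fin r)`: `none` is `y`, `some m` is `x_{m+1}`. -/
def youngFixed (r k : ℕ) (c : Fin k → ℕ) : Set (MvPolynomial (Option (Fin r)) ℚ) :=
  {p | ∀ τ : Equiv.Perm (Fin r),
    (∀ (j : Fin k) (m : Fin r),
      ((∑ l ∈ Finset.Iio j, c l) ≤ m.val ∧ m.val < (∑ l ∈ Finset.Iio j, c l) + c j) →
      ((∑ l ∈ Finset.Iio j, c l) ≤ (τ m).val ∧ (τ m).val < (∑ l ∈ Finset.Iio j, c l) + c j)) →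
    rename (Option.map ⇑τ) p = p}

lemma Fin.val_zero_sub_one {k : ℕ} [NeZero k] : ((0 : Fin k) - 1).val = k - 1 := by
  obtain ⟨n, rfl⟩ := Nat.exists_eq_add_one_of_ne_zero (NeZero.ne k)
  simp [Fin.coe_neg_one]

lemma Fin.val_add_natCast_of_le {r : ℕ} [NeZero r] (i : Fin r) {m : ℕ} (hm : m ≤ r) :
    (i + (m : Fin r)).val = if r ≤ (i : ℕ) + m then (i : ℕ) + m - r else (i : ℕ) + m := by
  rcases hm.eq_or_lt with rfl | hm
  · simp
  · rw [Fin.val_add_eq_ite, Fin.val_natCast, Nat.mod_eq_of_lt hm]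

lemma Equiv.Perm.apply_mem_iff_of_mapsTo {α : Type*} [Finite α] {τ : Equiv.Perm α}
    {s : Set α} (h : MapsTo τ s s) (a : α) : τ a ∈ s ↔ a ∈ s :=
  ⟨fun ha => by simpa using Equiv.Perm.perm_symm_mapsTo_of_mapsTo τ h ha, fun ha => h ha⟩

lemma mapsTo_permCongr_iff {α β ι : Type*} (e : α ≃ β) (σ : ι ≃ ι) {B : ι → Set α}
    {B' : ι → Set β} (hB : ∀ j a, e a ∈ B' (σ j) ↔ a ∈ B j) (τ : Equiv.Perm α) :
    (∀ j, MapsTo (e.permCongr τ) (B' j) (B' j)) ↔ ∀ j, MapsTo τ (B j) (B j) := by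
  rw [← σ.forall_congr_right]
  refine forall_congr' fun j => ?_
  simp only [MapsTo, ← e.forall_congr_right, Equiv.permCongr_apply, Equiv.symm_apply_apply, hB]

section Blocks

variable {k : ℕ} (c : Fin k → ℕ)

def blockStart (j : Fin k) : ℕ := ∑ l ∈ Finset.Iio j, c l

def block (r : ℕ) (j : Fin k) : Set (Fin r) :=
  {i | blockStart c j ≤ i ∧ (i : ℕ) < blockStart c j + c j}

lemma mem_youngFixed_iff {r : ℕ} (p : MvPolynomial (Option (Fin r)) ℚ) :
    p ∈ youngFixed r k c ↔ ∀ τ : Equiv.Perm (Fin r),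
      (∀ j, MapsTo τ (block c r j) (block c r j)) → rename (Option.map τ) p = p :=
  Iff.rfl

lemma blockStart_add_self (j : Fin k) : blockStart c j + c j = ∑ l ∈ Finset.Iic j, c l := by
  rw [blockStart, ← Finset.Iio_insert, Finset.sum_insert Finset.notMem_Iio_self, add_comm]

lemma blockStart_mono : Monotone (blockStart c) := fun _ _ hij =>
  Finset.sum_le_sum_of_subset (Finset.Iio_subset_Iio hij)

variable [NeZero k]

lemma blockStart_zero : blockStart c 0 = 0 := by
  simp [blockStart]

lemma blockStart_add_one {j : Fin k} (hj : j.val + 1 < k) :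
    blockStart c (j + 1) = blockStart c j + c j := by
  rw [blockStart_add_self, blockStart]
  congr 1
  ext l
  simp only [Finset.mem_Iio, Finset.mem_Iic, Fin.lt_def, Fin.le_def, Fin.val_add_one_of_lt' hj]
  omega

lemma blockStart_last_add : blockStart c (0 - 1) + c (0 - 1) = ∑ j, c j := by
  rw [blockStart_add_self]
  congr 1
  ext l
  simp only [Finset.mem_Iic, Finset.mem_univ, iff_true, Fin.le_def, Fin.val_zero_sub_one]
  omega

lemma blockStart_add_le_last {j : Fin k} (hj : j.val + 1 < k) :
    blockStart c j + c j ≤ blockStart c (0 - 1) := by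
  rw [← blockStart_add_one c hj]
  apply blockStart_mono
  rw [Fin.le_def, Fin.val_add_one_of_lt' hj, Fin.val_zero_sub_one]
  omega

lemma blockStart_rotate_add_one {j : Fin k} (hj : j.val + 1 < k) :
    blockStart (fun l => c (l - 1)) (j + 1) = c (0 - 1) + blockStart c j := by
  induction hn : j.val generalizing j with
  | zero =>
    obtain rfl : j = 0 := Fin.ext hn
    rw [blockStart_add_one _ hj, blockStart_zero, blockStart_zero, zero_add, add_zero]
  | succ n ih =>
    have hj' : (j - 1).val = n := by
      rw [Fin.val_sub_one_of_ne_zero fun h => by simp [h] at hn]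
      omega
    rw [blockStart_add_one _ hj, ← sub_add_cancel j 1, ih (by omega) hj',
      blockStart_add_one c (by omega), add_sub_cancel_right, add_assoc]

variable {r : ℕ}

lemma le_add_last_iff_mem_block (hsum : ∑ j, c j = r) (i : Fin r) :
    r ≤ i + c (0 - 1) ↔ i ∈ block c r (0 - 1) := by
  have := blockStart_last_add c
  have := i.isLt
  simp only [block, mem_ofPred_eq]
  omega

lemma add_last_mem_block_rotate_iff [NeZero r] (hsum : ∑ j, c j = r) (j : Fin k) (i : Fin r) :
    i + (c (0 - 1) : Fin r) ∈ block (fun l => c (l - 1)) r (j + 1) ↔ i ∈ block c r j := by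
  have hlast := blockStart_last_add c
  rw [hsum] at hlast
  have hi := i.isLt
  simp only [block, mem_ofPred_eq, add_sub_cancel_right,
    Fin.val_add_natCast_of_le i (show c (0 - 1) ≤ r by omega)]
  by_cases hj : j.val + 1 < k
  · have := blockStart_add_le_last c hj
    rw [blockStart_rotate_add_one c hj]
    split_ifs <;> omega
  · obtain rfl : j = 0 - 1 := Fin.ext (by rw [Fin.val_zero_sub_one]; omega)
    rw [sub_add_cancel, blockStart_zero]
    split_ifs <;> omega

end Blocks

section Shift

variable {R : Type*} [CommRing R] {r : ℕ}
  (ρ : MvPolynomial (Option (Fin r)) R ≃ₐ[R] MvPolynomial (Option (Fin r)) R)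
  (hρy : ρ (X none) = X none)
include hρy

lemma pow_apply_X_none (m : ℕ) : (ρ ^ m) (X none) = X none := by
  induction m with
  | zero => rfl
  | succ m ih => rw [pow_succ, AlgEquiv.mul_apply, hρy, ih]

variable [NeZero r]
  (hρx : ∀ i : Fin r, ρ (X (some i)) = X (some (i + 1)) - (if i + 1 = 0 then X none else 0))
include hρx

lemma pow_apply_X_some {m : ℕ} (hm : m ≤ r) (i : Fin r) :
    (ρ ^ m) (X (some i)) = X (some (i + m)) - if r ≤ (i : ℕ) + m then X none else 0 := by
  induction m generalizing i with
  | zero => simp [Nat.not_le.mpr i.isLt]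
  | succ m ih =>
    rw [pow_succ, AlgEquiv.mul_apply, hρx, map_sub, apply_ite (ρ ^ m), map_zero,
      pow_apply_X_none ρ hρy, ih (by omega), sub_sub, Nat.cast_succ, add_assoc, add_comm 1]
    congr 1
    by_cases hi : (i : ℕ) + 1 < r
    · have hi0 : i + 1 ≠ 0 := fun h => by simpa [h] using Fin.val_add_one_of_lt' hi
      rw [Fin.val_add_one_of_lt' hi, if_neg hi0, add_zero]
      exact if_congr (by omega) rfl rfl
    · obtain rfl : i = 0 - 1 := Fin.ext (by rw [Fin.val_zero_sub_one]; omega)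
      rw [sub_add_cancel, if_pos rfl, Fin.val_zero, if_neg (by omega), if_pos (by omega),
        zero_add]

lemma pow_apply_rename {m : ℕ} (hm : m ≤ r) (τ : Equiv.Perm (Fin r))
    (hτ : ∀ i, r ≤ (τ i : ℕ) + m ↔ r ≤ (i : ℕ) + m) (p : MvPolynomial (Option (Fin r)) R) :
    (ρ ^ m) (rename (Option.map τ) p) =
      rename (Option.map ((Equiv.addRight (m : Fin r)).permCongr τ)) ((ρ ^ m) p) := by
  have h : ((ρ ^ m : _ ≃ₐ[R] _) : _ →ₐ[R] _).comp (rename (Option.map τ)) =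
      (rename (Option.map ((Equiv.addRight (m : Fin r)).permCongr τ))).comp (ρ ^ m) := by
    refine algHom_ext fun v => ?_
    cases v with
    | none =>
      simp only [AlgHom.comp_apply, rename_X, Option.map_none, AlgEquiv.coe_toAlgHom,
        pow_apply_X_none ρ hρy]
    | some i =>
      simp only [AlgHom.comp_apply, rename_X, Option.map_some, AlgEquiv.coe_toAlgHom,
        pow_apply_X_some ρ hρy hρx hm, map_sub, apply_ite (rename _), map_zero, Option.map_none,
        Equiv.permCongr_apply, Equiv.addRight_symm, Equiv.coe_addRight, add_neg_cancel_right, hτ]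
  exact AlgHom.congr_fun h p

end Shift

lemma pow_apply_mem_youngFixed_rotate_iff {r : ℕ} [NeZero r]
    (ρ : MvPolynomial (Option (Fin r)) ℚ ≃ₐ[ℚ] MvPolynomial (Option (Fin r)) ℚ)
    (hρy : ρ (X none) = X none)
    (hρx : ∀ i : Fin r, ρ (X (some i)) = X (some (i + 1)) - (if i + 1 = 0 then X none else 0))
    {k : ℕ} [NeZero k] (c : Fin k → ℕ) (hsum : ∑ j, c j = r)
    (p : MvPolynomial (Option (Fin r)) ℚ) :
    (ρ ^ c (0 - 1)) p ∈ youngFixed r k (fun j => c (j - 1)) ↔ p ∈ youngFixed r k c := by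
  have hm : c (0 - 1) ≤ r := hsum ▸ Finset.single_le_sum (by simp) (Finset.mem_univ _)
  let e := Equiv.addRight (c (0 - 1) : Fin r)
  rw [mem_youngFixed_iff, mem_youngFixed_iff, ← (Equiv.permCongr e).forall_congr_right]
  refine forall_congr' fun τ => ?_
  rw [mapsTo_permCongr_iff e (Equiv.addRight 1) (B := block c r)
    (B' := block (fun l => c (l - 1)) r) (add_last_mem_block_rotate_iff c hsum) τ]
  refine imp_congr_right fun hτ => ?_
  have hwrap (i : Fin r) : r ≤ (τ i : ℕ) + c (0 - 1) ↔ r ≤ (i : ℕ) + c (0 - 1) := by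
    rw [le_add_last_iff_mem_block c hsum, le_add_last_iff_mem_block c hsum,
      Equiv.Perm.apply_mem_iff_of_mapsTo (hτ _)]
  rw [← pow_apply_rename ρ hρy hρx hm τ hwrap, (ρ ^ c (0 - 1)).injective.eq_iff]

/-- Here `c ((0 : Fin k) - 1) = c (k−1) = i_k`, and `fun j => c (j - 1)` is the rotated
composition (i_k, i_1, …, i_{k−1}). -/
theorem stmt_8_general (r : ℕ) [NeZero r]
    (ρ : MvPolynomial (Option (Fin r)) ℚ ≃ₐ[ℚ] MvPolynomial (Option (Fin r)) ℚ)
    (hρy : ρ (X none) = X none)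
    (hρx : ∀ i : Fin r, ρ (X (some i)) =
      X (some (i + 1)) - (if i + 1 = 0 then X none else 0))
    (k : ℕ) [NeZero k] (c : Fin k → ℕ) (hsum : ∑ j, c j = r) :
    Set.BijOn ⇑(ρ ^ c ((0 : Fin k) - 1)) (youngFixed r k c)
      (youngFixed r k (fun j => c (j - 1))) :=
  (ρ ^ c ((0 : Fin k) - 1)).toEquiv.bijOn
    (pow_apply_mem_youngFixed_rotate_iff ρ hρy hρx c hsum)

/-- for a composition (i_1, …, i_k) of r, the automorphism ρ^{i_k} maps
R_{i_1⋯i_k} bijectively onto R_{i_k i_1⋯i_{k−1}} (hence restricts to a ℚ-algebra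
isomorphism, ρ being a ℚ-algebra automorphism).
Here `c ((0 : Fin k) - 1) = c (k−1) = i_k`, and `fun j => c (j - 1)` is the rotated
composition (i_k, i_1, …, i_{k−1}); `ρ ^ m` is composition of automorphisms. -/
theorem stmt_8 (r : ℕ) (hr : 3 ≤ r) [NeZero r]
    (ρ : MvPolynomial (Option (Fin r)) ℚ ≃ₐ[ℚ] MvPolynomial (Option (Fin r)) ℚ)
    (hρy : ρ (X none) = X none)
    (hρx : ∀ i : Fin r, ρ (X (some i)) =
      X (some (i + 1)) - (if i + 1 = 0 then X none else 0))
    (k : ℕ) [NeZero k] (c : Fin k → ℕ) (hpos : ∀ j, 0 < c j) (hsum : ∑ j, c j = r) :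
    Set.BijOn ⇑(ρ ^ c ((0 : Fin k) - 1)) (youngFixed r k c)
      (youngFixed r k (fun j => c (j - 1))) :=
  stmt_8_general r ρ hρy hρx k c hsum
end

section
/- Let C be a commutative ring, y ∈ C, n a natural number, a_1, …, a_n ∈ C, and 0 ≤ k ≤ n. Then e_{n−k}(a_1, …, a_n) = Σ_{i=0}^{n−k} (−1)^i · C(k+i, i) · y^i · e_{n−k−i}(a_1 + y, …, a_n + y), where C(k+i, i) denotes the binomial coefficient. -/
/-!
Vieta's formula reads `e_{N-k}(a)` off as the coefficient of `X^k` in `∏ (X + a_j)`. Writing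
`X + a_j = (X - y) + (a_j + y)` and expanding the product in powers of `X - y` gives
`∏ (X + a_j) = Σ_j e_j(a + y) (X - y)^(N-j)`; the coefficient of `X^k` in `(X - y)^(k+i)` is
`C(k+i, i) (-y)^i`.
-/

def esym {C : Type*} [CommRing C] {n : ℕ} (m : ℕ) (a : Fin n → C) : C :=
  ∑ s ∈ Finset.univ.powersetCard m, ∏ j ∈ s, a j

open Polynomial

namespace Multiset

variable {R : Type*} [CommRing R]

theorem prod_X_add_C_eq_sum_esymm_map_add (s : Multiset R) (y : R) :
    (s.map fun r => X + C r).prod =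
      ∑ j ∈ Finset.range (card s + 1),
        C ((s.map (· + y)).esymm j) * (X + C (-y)) ^ (card s - j) := by
  have h := congrArg (·.comp (X + C (-y))) (prod_X_add_C_eq_sum_esymm (s.map (· + y)))
  simp only [card_map, map_map, Function.comp_def, multiset_prod_comp, Polynomial.sum_comp,
    mul_comp, pow_comp, add_comp, X_comp, C_comp] at h
  rw [← h]
  congr 2
  funext r
  rw [C_add, C_neg]
  ring

theorem esymm_eq_sum_esymm_map_add (s : Multiset R) (y : R) {k : ℕ} (hk : k ≤ card s) :
    s.esymm (card s - k) =
      ∑ i ∈ Finset.range (card s - k + 1),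
        (-1) ^ i * ((k + i).choose i : R) * y ^ i * (s.map (· + y)).esymm (card s - k - i) := by
  have h := congrArg (coeff · k) (prod_X_add_C_eq_sum_esymm_map_add s y)
  simp only [prod_X_add_C_coeff s hk, finsetSum_coeff, coeff_C_mul, coeff_X_add_C_pow] at h
  rw [h]
  obtain ⟨m, hm⟩ : ∃ m, card s = m + k := ⟨card s - k, by omega⟩
  rw [hm, show m + k + 1 = (m + 1) + k by omega, Finset.sum_range_add, Nat.add_sub_cancel]
  have tail_eq_zero : ∀ x ∈ Finset.range k, (s.map (· + y)).esymm (m + 1 + x) *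
      ((-y) ^ (m + k - (m + 1 + x) - k) * ((m + k - (m + 1 + x)).choose k : R)) = 0 := by
    intro x hx
    rw [Nat.choose_eq_zero_of_lt (by grind), Nat.cast_zero, mul_zero, mul_zero]
  rw [Finset.sum_eq_zero tail_eq_zero, add_zero, ← Finset.sum_range_reflect]
  refine Finset.sum_congr rfl fun i hi => ?_
  have hi : i ≤ m := Nat.lt_succ_iff.mp (Finset.mem_range.mp hi)
  rw [Nat.add_sub_cancel, show m + k - (m - i) = k + i by omega, Nat.add_sub_cancel_left,
    Nat.choose_symm_add, neg_pow]
  ring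

end Multiset

theorem esym_eq_esymm {C : Type*} [CommRing C] {n : ℕ} (m : ℕ) (a : Fin n → C) :
    esym m a = (Finset.univ.val.map a).esymm m :=
  (Finset.esymm_map_val a Finset.univ m).symm

/-- for a commutative ring C, y ∈ C, a_1, …, a_n ∈ C and 0 ≤ k ≤ n,
e_{n−k}(a_1, …, a_n) = Σ_{i=0}^{n−k} (−1)^i · C(k+i, i) · y^i · e_{n−k−i}(a_1 + y, …, a_n + y). -/
theorem stmt_10 {C : Type*} [CommRing C] (y : C) (n : ℕ) (a : Fin n → C) (k : ℕ)
    (hk : k ≤ n) :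
    esym (n - k) a =
      ∑ i ∈ Finset.range (n - k + 1),
        (-1 : C) ^ i * (Nat.choose (k + i) i : C) * y ^ i *
          esym (n - k - i) (fun j => a j + y) := by
  have hcard : Multiset.card (Finset.univ.val.map a) = n := by simp
  have hmap : Finset.univ.val.map (fun j => a j + y) = (Finset.univ.val.map a).map (· + y) :=
    (Multiset.map_map (· + y) a _).symm
  simp only [esym_eq_esymm, hmap]
  have h := Multiset.esymm_eq_sum_esymm_map_add (Finset.univ.val.map a) y (hcard ▸ hk)
  rwa [hcard] at h
end

section
/- Equip V with the symmetric K-bilinear form determined by ⟨e_s, e_t⟩ = δ_{s,t}. Then for all v, w ∈ V and all 1 ≤ i ≤ n (subscripts mod n): ⟨E_i v, w⟩ = ⟨v, q·K_iK_{i+1}^{−1}F_i w⟩; ⟨F_i v, w⟩ = ⟨v, q·K_i^{−1}K_{i+1}E_i w⟩; ⟨K_i^{±1} v, w⟩ = ⟨v, K_i^{±1} w⟩; and ⟨R^{±1} v, w⟩ = ⟨v, R^{∓1} w⟩. (Thus the bilinear form intertwines the generators of the Û_q(ĝl_n)-action on V with their images under the anti-involution ρ.) -/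
noncomputable section

/-- K = ℚ(q), the field of rational functions over ℚ. -/
abbrev Kq : Type := RatFunc ℚ

/-- The formal parameter q. -/
def q : Kq := RatFunc.X

/-- Green's space V: finitely supported functions ℤ → K, basis {e_t}. -/
abbrev Vsp : Type := ℤ →₀ Kq

/-- The basis vector e_t. -/
def ee (t : ℤ) : Vsp := Finsupp.single t 1

/-- The bilinear form on V determined by ⟨e_s, e_t⟩ = δ_{s,t}. -/
def form (v w : Vsp) : Kq := v.sum fun t c => c * w t


/-! Every generator acts on the basis as a weighted shift `e_s ↦ a(s) e_{σ s}`, and for the form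
`⟨e_s, e_t⟩ = δ_{s,t}` the transpose of such an operator is `e_{σ s} ↦ a(s) e_s`. So each identity
reduces to recognising the right-hand operator as this transpose. For `E_i` the factor `q` is
cancelled because `K_i K_{i+1}⁻¹` acts on `e_s`, `s ≡ i + 1`, by `q⁻¹`: here `s ≢ i` since `n ≥ 2`;
symmetrically for `F_i`. -/

lemma q_ne_zero : q ≠ 0 := RatFunc.X_ne_zero

lemma form_add_left (v v' w : Vsp) : form (v + v') w = form v w + form v' w :=
  Finsupp.sum_add_index' (by simp) (by intros; ring)

lemma form_smul_left (c : Kq) (v w : Vsp) : form (c • v) w = c * form v w := by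
  rw [form, Finsupp.sum_smul_index (by simp), form, Finsupp.mul_sum]
  simp [mul_assoc]

lemma form_add_right (v w w' : Vsp) : form v (w + w') = form v w + form v w' := by
  simp [form, mul_add, Finsupp.sum_add]

lemma form_smul_right (c : Kq) (v w : Vsp) : form v (c • w) = c * form v w := by
  rw [form, form, Finsupp.mul_sum]
  simp [mul_left_comm]

def formₗ : Vsp →ₗ[Kq] Vsp →ₗ[Kq] Kq :=
  LinearMap.mk₂ Kq form form_add_left form_smul_left form_add_right form_smul_right

lemma form_ee_ee (s t : ℤ) : form (ee s) (ee t) = if s = t then 1 else 0 := by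
  simp [form, ee, Finsupp.single_apply, eq_comm]

lemma form_map_eq_of_basis (A B : Module.End Kq Vsp)
    (h : ∀ s t : ℤ, form (A (ee s)) (ee t) = form (ee s) (B (ee t))) (v w : Vsp) :
    form (A v) w = form v (B w) := by
  have hext : formₗ.compl₁₂ A LinearMap.id = formₗ.compl₂ B :=
    LinearMap.ext_basis Finsupp.basisSingleOne Finsupp.basisSingleOne h
  exact LinearMap.congr_fun₂ hext v w

lemma form_map_eq_of_weightedShift (A B : Module.End Kq Vsp) (σ : ℤ ≃ ℤ) (a : ℤ → Kq)
    (hA : ∀ s, A (ee s) = a s • ee (σ s)) (hB : ∀ s, B (ee (σ s)) = a s • ee s) (v w : Vsp) :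
    form (A v) w = form v (B w) := by
  refine form_map_eq_of_basis A B (fun s t => ?_) v w
  obtain ⟨t, rfl⟩ := σ.surjective t
  simp only [hA, hB, form_smul_left, form_smul_right, form_ee_ee, σ.injective.eq_iff]
  split_ifs with h <;> simp [h]

lemma form_map_self_of_diagonal (A : Module.End Kq Vsp) (c : ℤ → Kq)
    (hA : ∀ s, A (ee s) = c s • ee s) (v w : Vsp) : form (A v) w = form v (A w) :=
  form_map_eq_of_weightedShift A A (Equiv.refl ℤ) c hA hA v w

section Generators

variable {n : ℕ}

lemma form_E_left [Fact (1 < n)] (E F Kp Km : ZMod n → Module.End Kq Vsp)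
    (hE : ∀ (i : ZMod n) (s : ℤ),
      E i (ee s) = if ((s - 1 : ℤ) : ZMod n) = i then ee (s - 1) else 0)
    (hF : ∀ (i : ZMod n) (s : ℤ),
      F i (ee s) = if ((s : ℤ) : ZMod n) = i then ee (s + 1) else 0)
    (hKp : ∀ (i : ZMod n) (s : ℤ),
      Kp i (ee s) = if ((s : ℤ) : ZMod n) = i then q • ee s else ee s)
    (hKm : ∀ (i : ZMod n) (s : ℤ),
      Km i (ee s) = if ((s : ℤ) : ZMod n) = i then q⁻¹ • ee s else ee s)
    (i : ZMod n) (v w : Vsp) :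
    form (E i v) w = form v (q • Kp i (Km (i + 1) (F i w))) := by
  refine form_map_eq_of_weightedShift (E i) (q • (Kp i * Km (i + 1) * F i)) (Equiv.subRight 1)
    (fun s => if ((s - 1 : ℤ) : ZMod n) = i then 1 else 0) (fun s => ?_) (fun s => ?_) v w
  · simp [hE, ite_smul]
  · show q • Kp i (Km (i + 1) (F i (ee (s - 1)))) = _
    rw [hF, sub_add_cancel]
    split_ifs with h
    · have hs : ((s : ℤ) : ZMod n) = i + 1 := by rw [← h]; push_cast; ring
      rw [hKm, if_pos hs, map_smul, hKp, if_neg (hs ▸ add_ne_left.2 one_ne_zero), smul_smul,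
        mul_inv_cancel₀ q_ne_zero, one_smul]
    · simp

lemma form_F_left [Fact (1 < n)] (E F Kp Km : ZMod n → Module.End Kq Vsp)
    (hE : ∀ (i : ZMod n) (s : ℤ),
      E i (ee s) = if ((s - 1 : ℤ) : ZMod n) = i then ee (s - 1) else 0)
    (hF : ∀ (i : ZMod n) (s : ℤ),
      F i (ee s) = if ((s : ℤ) : ZMod n) = i then ee (s + 1) else 0)
    (hKp : ∀ (i : ZMod n) (s : ℤ),
      Kp i (ee s) = if ((s : ℤ) : ZMod n) = i then q • ee s else ee s)
    (hKm : ∀ (i : ZMod n) (s : ℤ),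
      Km i (ee s) = if ((s : ℤ) : ZMod n) = i then q⁻¹ • ee s else ee s)
    (i : ZMod n) (v w : Vsp) :
    form (F i v) w = form v (q • Km i (Kp (i + 1) (E i w))) := by
  refine form_map_eq_of_weightedShift (F i) (q • (Km i * Kp (i + 1) * E i)) (Equiv.addRight 1)
    (fun s => if ((s : ℤ) : ZMod n) = i then 1 else 0) (fun s => ?_) (fun s => ?_) v w
  · simp [hF, ite_smul]
  · show q • Km i (Kp (i + 1) (E i (ee (s + 1)))) = _
    rw [hE, add_sub_cancel_right]
    split_ifs with hs
    · have hs' : ((s : ℤ) : ZMod n) ≠ i + 1 := hs ▸ (add_ne_left.2 one_ne_zero).symm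
      rw [hKp, if_neg hs', hKm, if_pos hs, smul_smul, mul_inv_cancel₀ q_ne_zero, one_smul]
    · simp

lemma form_K_left (K : ZMod n → Module.End Kq Vsp) (c : Kq)
    (hK : ∀ (i : ZMod n) (s : ℤ), K i (ee s) = if ((s : ℤ) : ZMod n) = i then c • ee s else ee s)
    (i : ZMod n) (v w : Vsp) : form (K i v) w = form v (K i w) :=
  form_map_self_of_diagonal (K i) (fun s => if ((s : ℤ) : ZMod n) = i then c else 1)
    (fun s => by simp [hK, ite_smul]) v w

end Generators

/-- the bilinear form ⟨e_s, e_t⟩ = δ_{s,t} on V satisfies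
⟨E_i v, w⟩ = ⟨v, q·K_iK_{i+1}^{−1}F_i w⟩, ⟨F_i v, w⟩ = ⟨v, q·K_i^{−1}K_{i+1}E_i w⟩,
⟨K_i^{±1} v, w⟩ = ⟨v, K_i^{±1} w⟩ and ⟨R^{±1} v, w⟩ = ⟨v, R^{∓1} w⟩, i.e. it intertwines
the generators of the Û_q(ĝl_n)-action with their images under the anti-involution ρ. -/
theorem stmt_13 (n : ℕ) (hn : 3 ≤ n)
    (E F Kp Km : ZMod n → Module.End Kq Vsp) (R R' : Module.End Kq Vsp)
    (hE : ∀ (i : ZMod n) (s : ℤ),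
      E i (ee s) = if ((s - 1 : ℤ) : ZMod n) = i then ee (s - 1) else 0)
    (hF : ∀ (i : ZMod n) (s : ℤ),
      F i (ee s) = if ((s : ℤ) : ZMod n) = i then ee (s + 1) else 0)
    (hKp : ∀ (i : ZMod n) (s : ℤ),
      Kp i (ee s) = if ((s : ℤ) : ZMod n) = i then q • ee s else ee s)
    (hKm : ∀ (i : ZMod n) (s : ℤ),
      Km i (ee s) = if ((s : ℤ) : ZMod n) = i then q⁻¹ • ee s else ee s)
    (hR : ∀ s : ℤ, R (ee s) = ee (s + 1))
    (hR' : ∀ s : ℤ, R' (ee s) = ee (s - 1)) :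
    (∀ (v w : Vsp) (i : ZMod n),
      form (E i v) w = form v (q • Kp i (Km (i + 1) (F i w)))) ∧
    (∀ (v w : Vsp) (i : ZMod n),
      form (F i v) w = form v (q • Km i (Kp (i + 1) (E i w)))) ∧
    (∀ (v w : Vsp) (i : ZMod n), form (Kp i v) w = form v (Kp i w)) ∧
    (∀ (v w : Vsp) (i : ZMod n), form (Km i v) w = form v (Km i w)) ∧
    (∀ v w : Vsp, form (R v) w = form v (R' w)) ∧
    (∀ v w : Vsp, form (R' v) w = form v (R w)) := by
  have : Fact (1 < n) := ⟨by omega⟩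
  refine ⟨fun v w i => form_E_left E F Kp Km hE hF hKp hKm i v w,
    fun v w i => form_F_left E F Kp Km hE hF hKp hKm i v w,
    fun v w i => form_K_left Kp q hKp i v w, fun v w i => form_K_left Km q⁻¹ hKm i v w,
    form_map_eq_of_weightedShift R R' (Equiv.addRight 1) 1 (by simpa using hR) (by simp [hR']),
    form_map_eq_of_weightedShift R' R (Equiv.subRight 1) 1 (by simpa using hR') (by simp [hR])⟩
end
end

section
/- Let A be a K-algebra and f : Ŝ(n,r) → A a surjective K-algebra homomorphism whose restriction to the subalgebra 1_r·Ŝ(n,r)·1_r is injective. Then f is injective, and hence f is a K-algebra isomorphism Ŝ(n,r) ≅ A. -/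
noncomputable section

/-- The quantum integer [a] = (q^a − q^{−a})/(q − q^{−1}). -/
def qint (a : ℤ) : Kq := (q ^ a - q ^ (-a)) / (q - q⁻¹)

/-- Generators of the affine q-Schur algebra Ŝ(n,r): idempotents 1_λ for weights
λ ∈ ℤ^n (indexed cyclically by ZMod n; by convention 1_ν = 0 for ν ∉ Λ(n,r)),
and E_{+i}, E_{−i} (written F) for colors i ∈ ℤ/n. -/
inductive SGen (n : ℕ) : Type
  | idem : (ZMod n → ℤ) → SGen n
  | E : ZMod n → SGen n
  | F : ZMod n → SGen n

/-- The generator 1_λ in the free algebra. -/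
def iW (n : ℕ) (lam : ZMod n → ℤ) : FreeAlgebra Kq (SGen n) :=
  FreeAlgebra.ι Kq (SGen.idem lam)
/-- The generator E_i in the free algebra. -/
def eW (n : ℕ) (i : ZMod n) : FreeAlgebra Kq (SGen n) := FreeAlgebra.ι Kq (SGen.E i)
/-- The generator E_{−i} in the free algebra. -/
def fW (n : ℕ) (i : ZMod n) : FreeAlgebra Kq (SGen n) := FreeAlgebra.ι Kq (SGen.F i)

/-- The simple root ᾱ_i = ε_i − ε_{i+1} (cyclically: ᾱ_n = ε_n − ε_1). -/
def alphaW (n : ℕ) (i : ZMod n) : ZMod n → ℤ := Pi.single i 1 - Pi.single (i + 1) 1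

/-- λ ∈ Λ(n,r): all entries nonnegative and summing to r. -/
def inLambda (n r : ℕ) [NeZero n] (lam : ZMod n → ℤ) : Prop :=
  (∀ i, 0 ≤ lam i) ∧ (∑ i, lam i) = (r : ℤ)

/-- The (finite) set Λ(n,r) of weights, as a Finset. -/
def LamFinset (n r : ℕ) [NeZero n] : Finset (ZMod n → ℤ) :=
  (Finset.Nat.antidiagonalTuple n r).image
    (fun t : Fin n → ℕ => fun i : ZMod n => (t ⟨i.val, ZMod.val_lt i⟩ : ℤ))

/-- The defining relations of the affine q-Schur algebra Ŝ(n,r) (subscripts mod n,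
with the convention 1_ν = 0 whenever ν ∉ Λ(n,r)). -/
inductive SRel (n r : ℕ) [NeZero n] :
    FreeAlgebra Kq (SGen n) → FreeAlgebra Kq (SGen n) → Prop
  | idem_zero (lam : ZMod n → ℤ) (h : ¬ inLambda n r lam) : SRel n r (iW n lam) 0
  | idem_mul_self (lam : ZMod n → ℤ) : SRel n r (iW n lam * iW n lam) (iW n lam)
  | idem_mul_ne (lam mu : ZMod n → ℤ) (h : lam ≠ mu) : SRel n r (iW n lam * iW n mu) 0
  | sum_idem : SRel n r (∑ lam ∈ LamFinset n r, iW n lam) 1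
  | E_idem (i : ZMod n) (lam : ZMod n → ℤ) :
      SRel n r (eW n i * iW n lam) (iW n (lam + alphaW n i) * eW n i)
  | F_idem (i : ZMod n) (lam : ZMod n → ℤ) :
      SRel n r (fW n i * iW n lam) (iW n (lam - alphaW n i) * fW n i)
  | EF (i : ZMod n) :
      SRel n r (eW n i * fW n i - fW n i * eW n i)
        (∑ lam ∈ LamFinset n r, qint (lam i - lam (i + 1)) • iW n lam)
  | EFne (i j : ZMod n) (h : i ≠ j) : SRel n r (eW n i * fW n j) (fW n j * eW n i)
  | serreE (i j : ZMod n) (h : j = i + 1 ∨ j = i - 1) :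
      SRel n r (eW n i * eW n i * eW n j - (q + q⁻¹) • (eW n i * eW n j * eW n i) +
        eW n j * eW n i * eW n i) 0
  | serreF (i j : ZMod n) (h : j = i + 1 ∨ j = i - 1) :
      SRel n r (fW n i * fW n i * fW n j - (q + q⁻¹) • (fW n i * fW n j * fW n i) +
        fW n j * fW n i * fW n i) 0
  | EEdist (i j : ZMod n) (h1 : j ≠ i + 1) (h2 : j ≠ i - 1) :
      SRel n r (eW n i * eW n j) (eW n j * eW n i)
  | FFdist (i j : ZMod n) (h1 : j ≠ i + 1) (h2 : j ≠ i - 1) :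
      SRel n r (fW n i * fW n j) (fW n j * fW n i)

/-- The affine q-Schur algebra Ŝ(n,r), presented by the generators `SGen n` and the
relations `SRel n r`. -/
abbrev Shat (n r : ℕ) [NeZero n] := RingQuot (SRel n r)

/-- The generator 1_λ of Ŝ(n,r). -/
def Ig (n r : ℕ) [NeZero n] (lam : ZMod n → ℤ) : Shat n r :=
  RingQuot.mkAlgHom Kq (SRel n r) (iW n lam)
/-- The generator E_i of Ŝ(n,r). -/
def Egs (n r : ℕ) [NeZero n] (i : ZMod n) : Shat n r :=
  RingQuot.mkAlgHom Kq (SRel n r) (eW n i)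
/-- The generator E_{−i} of Ŝ(n,r). -/
def Fgs (n r : ℕ) [NeZero n] (i : ZMod n) : Shat n r :=
  RingQuot.mkAlgHom Kq (SRel n r) (fW n i)

/-- The idempotent 1_r = 1_{(1^r)}, where (1^r) = (1,…,1,0,…,0) has its first r entries 1. -/
def oneR (n r : ℕ) [NeZero n] : Shat n r :=
  Ig n r (fun i => if i.val < r then 1 else 0)

lemma q_pow_nat_ne_one (m : ℕ) (hm : m ≠ 0) : q ^ m ≠ 1 := by
  intro h
  have hinj := RatFunc.algebraMap_injective ℚ
  have : (Polynomial.X : Polynomial ℚ) ^ m = 1 := by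
    apply hinj
    rw [map_pow, map_one, RatFunc.algebraMap_X]
    exact h
  have := congrArg Polynomial.natDegree this
  simp [Polynomial.natDegree_X_pow] at this
  exact hm this

lemma q_zpow_ne_one (z : ℤ) (hz : z ≠ 0) : q ^ z ≠ 1 := by
  intro h
  rcases lt_trichotomy z 0 with h1 | h1 | h1
  · have h3 : q ^ (-z) = 1 := by
      rw [zpow_neg, h, inv_one]
    have := q_pow_nat_ne_one (-z).toNat (by omega)
    rw [← zpow_natCast, Int.toNat_of_nonneg (by omega)] at this
    exact this h3
  · exact hz h1
  · have := q_pow_nat_ne_one z.toNat (by omega)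
    rw [← zpow_natCast, Int.toNat_of_nonneg (by omega)] at this
    exact this h

lemma qminus_ne_zero : q - q⁻¹ ≠ 0 := by
  intro h
  rw [sub_eq_zero] at h
  have h2 : q ^ (2:ℤ) = 1 := by
    rw [show (2:ℤ) = 1+1 by ring, zpow_add₀ q_ne_zero, zpow_one]
    nth_rewrite 2 [h]
    exact mul_inv_cancel₀ q_ne_zero
  exact q_zpow_ne_one 2 (by norm_num) h2

lemma qint_ne_zero (a : ℤ) (ha : a ≠ 0) : qint a ≠ 0 := by
  unfold qint
  apply div_ne_zero _ qminus_ne_zero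
  intro h
  rw [sub_eq_zero] at h
  have h2 : q ^ (2*a) = 1 := by
    rw [two_mul, zpow_add₀ q_ne_zero]
    nth_rewrite 2 [h]
    rw [← zpow_add₀ q_ne_zero, add_neg_cancel, zpow_zero]
  exact q_zpow_ne_one (2*a) (by omega) h2

set_option linter.unusedSectionVars false

section Aux
variable (n r : ℕ) [NeZero n]

def zmodFin : ZMod n ≃ Fin n where
  toFun i := ⟨i.val, ZMod.val_lt i⟩
  invFun j := ((j : ℕ) : ZMod n)
  left_inv i := ZMod.natCast_rightInverse i
  right_inv j := by ext; simp [ZMod.val_natCast_of_lt j.isLt]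

lemma sum_zmod {M : Type*} [AddCommMonoid M] (f : ZMod n → M) :
    ∑ i, f i = ∑ k ∈ Finset.range n, f ↑k := by
  rw [← Fin.sum_univ_eq_sum_range (fun k => f ↑k) n]
  exact Fintype.sum_equiv (zmodFin n) f _ (fun i => by simp [zmodFin, ZMod.natCast_rightInverse i])

lemma cast_inj_lt {a b : ℕ} (ha : a < n) (hb : b < n) : ((a : ZMod n) = (b : ZMod n)) ↔ a = b := by
  constructor
  · intro h
    have := congrArg ZMod.val h
    rwa [ZMod.val_natCast_of_lt ha, ZMod.val_natCast_of_lt hb] at this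
  · rintro rfl; rfl

lemma mem_LamFinset {lam : ZMod n → ℤ} : lam ∈ LamFinset n r ↔ inLambda n r lam := by
  constructor
  · intro h
    rw [LamFinset, Finset.mem_image] at h
    obtain ⟨t, ht, rfl⟩ := h
    rw [Finset.Nat.mem_antidiagonalTuple] at ht
    constructor
    · intro i; positivity
    · rw [← ht]
      push_cast
      exact Fintype.sum_equiv (zmodFin n) _ _ (fun i => rfl)
  · rintro ⟨h0, hs⟩
    rw [LamFinset, Finset.mem_image]
    refine ⟨fun j : Fin n => (lam ((j : ℕ) : ZMod n)).toNat, ?_, ?_⟩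
    · rw [Finset.Nat.mem_antidiagonalTuple]
      have : ((∑ j : Fin n, (lam ((j:ℕ) : ZMod n)).toNat : ℕ) : ℤ) = (r : ℤ) := by
        push_cast
        rw [Finset.sum_congr rfl (fun j _ => Int.toNat_of_nonneg (h0 _))]
        rw [← hs]
        exact Fintype.sum_equiv (zmodFin n).symm _ _ (fun j => rfl)
      exact_mod_cast this
    · funext i
      simp only [Fin.val_mk]
      rw [ZMod.natCast_rightInverse i, Int.toNat_of_nonneg (h0 _)]

lemma inLambda_om (hrn : r ≤ n) : inLambda n r (fun i : ZMod n => if i.val < r then (1:ℤ) else 0) := by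
  constructor
  · intro i; dsimp; split <;> norm_num
  · rw [sum_zmod]
    have : ∀ k ∈ Finset.range n, (if ((k : ZMod n)).val < r then (1:ℤ) else 0)
        = if k < r then (1:ℤ) else 0 := by
      intro k hk
      rw [ZMod.val_natCast_of_lt (Finset.mem_range.mp hk)]
    rw [Finset.sum_congr rfl this]
    rw [← Finset.sum_subset (Finset.range_subset_range.mpr hrn)
      (fun x _ hx => by rw [if_neg (by simpa using hx)])]
    rw [Finset.sum_congr rfl (fun x hx => if_pos (Finset.mem_range.mp hx)),
      Finset.sum_const, Finset.card_range]
    simp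

end Aux

section Alg
variable (n r : ℕ) [NeZero n]

lemma Ig_not {lam : ZMod n → ℤ} (h : ¬ inLambda n r lam) : Ig n r lam = 0 := by
  have := RingQuot.mkAlgHom_rel Kq (SRel.idem_zero (r := r) lam h)
  simpa [Ig] using this

lemma Ig_mul_self (lam : ZMod n → ℤ) : Ig n r lam * Ig n r lam = Ig n r lam := by
  have := RingQuot.mkAlgHom_rel Kq (SRel.idem_mul_self (r := r) lam)
  simpa [Ig, map_mul] using this

lemma Ig_mul_ne {lam mu : ZMod n → ℤ} (h : lam ≠ mu) : Ig n r lam * Ig n r mu = 0 := by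
  have := RingQuot.mkAlgHom_rel Kq (SRel.idem_mul_ne (r := r) lam mu h)
  simpa [Ig, map_mul] using this

lemma sum_Ig : ∑ lam ∈ LamFinset n r, Ig n r lam = 1 := by
  have := RingQuot.mkAlgHom_rel Kq (SRel.sum_idem (n := n) (r := r))
  simpa [Ig, map_sum, map_one] using this

lemma E_Ig (i : ZMod n) (lam : ZMod n → ℤ) :
    Egs n r i * Ig n r lam = Ig n r (lam + alphaW n i) * Egs n r i := by
  have := RingQuot.mkAlgHom_rel Kq (SRel.E_idem (r := r) i lam)
  simpa [Ig, Egs, map_mul] using this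

lemma F_Ig (i : ZMod n) (lam : ZMod n → ℤ) :
    Fgs n r i * Ig n r lam = Ig n r (lam - alphaW n i) * Fgs n r i := by
  have := RingQuot.mkAlgHom_rel Kq (SRel.F_idem (r := r) i lam)
  simpa [Ig, Fgs, map_mul] using this

lemma EF_rel (i : ZMod n) :
    Egs n r i * Fgs n r i - Fgs n r i * Egs n r i
      = ∑ lam ∈ LamFinset n r, qint (lam i - lam (i+1)) • Ig n r lam := by
  have := RingQuot.mkAlgHom_rel Kq (SRel.EF (r := r) i)
  simpa [Ig, Egs, Fgs, map_mul, map_sub, map_sum, map_smul] using this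

lemma EF_Ig (i : ZMod n) {lam : ZMod n → ℤ} (hlam : inLambda n r lam) :
    Egs n r i * (Ig n r (lam - alphaW n i) * Fgs n r i)
      - Fgs n r i * (Ig n r (lam + alphaW n i) * Egs n r i)
      = qint (lam i - lam (i+1)) • Ig n r lam := by
  have h1 : (Egs n r i * Fgs n r i - Fgs n r i * Egs n r i) * Ig n r lam
      = qint (lam i - lam (i+1)) • Ig n r lam := by
    rw [EF_rel, Finset.sum_mul]
    rw [Finset.sum_eq_single lam]
    · rw [smul_mul_assoc, Ig_mul_self]
    · intro mu _ hmu
      rw [smul_mul_assoc, Ig_mul_ne n r hmu, smul_zero]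
    · intro h
      exact absurd ((mem_LamFinset n r).mpr hlam) h
  rw [← h1, sub_mul, mul_assoc, mul_assoc, F_Ig, E_Ig]

lemma moveA (i : ZMod n) {lam : ZMod n → ℤ} (hlam : inLambda n r lam)
    (hne : lam i ≠ lam (i+1)) (hout : ¬ inLambda n r (lam + alphaW n i)) :
    Ig n r lam = (qint (lam i - lam (i+1)))⁻¹ •
      (Egs n r i * (Ig n r (lam - alphaW n i) * Fgs n r i)) := by
  have h := EF_Ig n r i hlam
  rw [Ig_not n r hout, zero_mul, mul_zero, sub_zero] at h
  rw [h, smul_smul, inv_mul_cancel₀ (qint_ne_zero _ (sub_ne_zero.mpr hne)), one_smul]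

lemma moveB (i : ZMod n) {lam : ZMod n → ℤ} (hlam : inLambda n r lam)
    (hne : lam i ≠ lam (i+1)) (hout : ¬ inLambda n r (lam - alphaW n i)) :
    Ig n r lam = (-(qint (lam i - lam (i+1)))⁻¹) •
      (Fgs n r i * (Ig n r (lam + alphaW n i) * Egs n r i)) := by
  have h := EF_Ig n r i hlam
  rw [Ig_not n r hout, zero_mul, mul_zero, zero_sub] at h
  rw [← neg_neg (Fgs n r i * (Ig n r (lam + alphaW n i) * Egs n r i)), smul_neg, ← neg_smul,
    neg_neg, h, smul_smul, inv_mul_cancel₀ (qint_ne_zero _ (sub_ne_zero.mpr hne)), one_smul]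

end Alg

section Comb
variable (n r : ℕ) [NeZero n]

def om : ZMod n → ℤ := fun i => if i.val < r then 1 else 0

lemma om_nonneg (x : ZMod n) : 0 ≤ om n r x := by unfold om; split <;> norm_num
lemma om_le_one (x : ZMod n) : om n r x ≤ 1 := by unfold om; split <;> norm_num

def psi (lam : ZMod n → ℤ) (i : ℕ) : ℤ :=
  ∑ j ∈ Finset.range (i+1), (lam (j : ZMod n) - om n r (j : ZMod n))

def phi (lam : ZMod n → ℤ) : ℕ := ∑ i ∈ Finset.range n, (psi n r lam i).natAbs

lemma psi_succ (lam : ZMod n → ℤ) (i : ℕ) :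
    psi n r lam (i+1) = psi n r lam i + (lam ↑(i+1) - om n r ↑(i+1)) :=
  Finset.sum_range_succ _ _

lemma psi_zero (lam : ZMod n → ℤ) : psi n r lam 0 = lam 0 - om n r 0 := by
  simp [psi]

lemma psi_last (hrn : r ≤ n) {lam : ZMod n → ℤ} (hlam : inLambda n r lam) :
    psi n r lam (n-1) = 0 := by
  have hn : 0 < n := Nat.pos_of_ne_zero (NeZero.ne n)
  have h1 : (n-1)+1 = n := Nat.succ_pred_eq_of_pos hn
  have h2 := (inLambda_om n r hrn).2
  rw [sum_zmod] at h2
  have h3 := hlam.2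
  rw [sum_zmod] at h3
  unfold psi
  rw [h1, Finset.sum_sub_distrib, h3]
  have : ∑ k ∈ Finset.range n, om n r ↑k = (r:ℤ) := h2
  rw [this, sub_self]

lemma eq_om_of_psi_zero {lam : ZMod n → ℤ} (h : ∀ i ∈ Finset.range n, psi n r lam i = 0) :
    lam = om n r := by
  have key : ∀ k, k < n → lam ↑k = om n r ↑k := by
    intro k
    induction k with
    | zero => intro hk
              have := h 0 (Finset.mem_range.mpr hk)
              rw [psi_zero] at this
              push_cast
              linarith
    | succ m ih => intro hk
                   have h1 := h (m+1) (Finset.mem_range.mpr hk)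
                   have h2 := h m (Finset.mem_range.mpr (by omega))
                   rw [psi_succ, h2] at h1
                   linarith
  funext i
  have : i = ((i.val : ℕ) : ZMod n) := (ZMod.natCast_rightInverse i).symm
  rw [this]
  exact key i.val (ZMod.val_lt i)

lemma alphaW_apply (i x : ZMod n) :
    alphaW n i x = (if x = i then 1 else 0) - (if x = i+1 then 1 else 0) := by
  simp [alphaW, Pi.single_apply]

lemma sum_alphaW (i : ZMod n) : ∑ x, alphaW n i x = 0 := by
  simp only [alphaW_apply]
  rw [Finset.sum_sub_distrib]
  rw [Finset.sum_ite_eq' Finset.univ i (fun _ => (1:ℤ)),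
    Finset.sum_ite_eq' Finset.univ (i+1) (fun _ => (1:ℤ))]
  simp

lemma sum_alpha_range (k i : ℕ) (hk : k+1 < n) (hi : i < n) :
    ∑ j ∈ Finset.range (i+1), alphaW n ↑k ↑j = if i = k then 1 else 0 := by
  have hcast : ((k : ZMod n) + 1) = ((k+1 : ℕ) : ZMod n) := by push_cast; ring
  have step : ∀ j ∈ Finset.range (i+1), alphaW n ↑k ↑j
      = (if j = k then (1:ℤ) else 0) - (if j = k+1 then (1:ℤ) else 0) := by
    intro j hj
    have hjn : j < n := by have := Finset.mem_range.mp hj; omega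
    rw [alphaW_apply, hcast]
    simp only [cast_inj_lt n hjn (show k < n by omega), cast_inj_lt n hjn hk]
  rw [Finset.sum_congr rfl step, Finset.sum_sub_distrib,
    Finset.sum_ite_eq' (Finset.range (i+1)) k (fun _ => (1:ℤ)),
    Finset.sum_ite_eq' (Finset.range (i+1)) (k+1) (fun _ => (1:ℤ))]
  simp only [Finset.mem_range]
  split_ifs <;> omega

lemma psi_add_alpha (k : ℕ) (hk : k+1 < n) (lam : ZMod n → ℤ) (i : ℕ) (hi : i < n) :
    psi n r (lam + alphaW n ↑k) i = psi n r lam i + (if i = k then 1 else 0) := by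
  unfold psi
  rw [← sum_alpha_range n k i hk hi, ← Finset.sum_add_distrib]
  exact Finset.sum_congr rfl (fun j _ => by simp [Pi.add_apply]; ring)

lemma psi_sub_alpha (k : ℕ) (hk : k+1 < n) (lam : ZMod n → ℤ) (i : ℕ) (hi : i < n) :
    psi n r (lam - alphaW n ↑k) i = psi n r lam i - (if i = k then 1 else 0) := by
  unfold psi
  rw [← sum_alpha_range n k i hk hi, ← Finset.sum_sub_distrib]
  exact Finset.sum_congr rfl (fun j _ => by simp [Pi.sub_apply]; ring)

end Comb

section Move
variable (n r : ℕ) [NeZero n]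

lemma cast_succ (k : ℕ) : ((k : ZMod n) + 1) = ((k+1 : ℕ) : ZMod n) := by push_cast; ring

lemma add_alpha_apply (lam : ZMod n → ℤ) (i x : ZMod n) :
    (lam + alphaW n i) x = lam x + ((if x = i then 1 else 0) - (if x = i+1 then 1 else 0)) := by
  rw [Pi.add_apply, alphaW_apply]

lemma sub_alpha_apply (lam : ZMod n → ℤ) (i x : ZMod n) :
    (lam - alphaW n i) x = lam x - ((if x = i then 1 else 0) - (if x = i+1 then 1 else 0)) := by
  rw [Pi.sub_apply, alphaW_apply]

lemma sum_add_alpha (lam : ZMod n → ℤ) (i : ZMod n) :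
    ∑ x, (lam + alphaW n i) x = ∑ x, lam x := by
  simp only [Pi.add_apply]
  rw [Finset.sum_add_distrib, sum_alphaW, add_zero]

lemma sum_sub_alpha (lam : ZMod n → ℤ) (i : ZMod n) :
    ∑ x, (lam - alphaW n i) x = ∑ x, lam x := by
  simp only [Pi.sub_apply]
  rw [Finset.sum_sub_distrib, sum_alphaW, sub_zero]

lemma exists_move (hrn : r < n) {lam : ZMod n → ℤ} (hlam : inLambda n r lam)
    (hphi : phi n r lam ≠ 0) :
    ∃ k : ℕ, k + 1 < n ∧ lam ↑k ≠ lam (↑k + 1) ∧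
      ((¬ inLambda n r (lam + alphaW n ↑k) ∧ inLambda n r (lam - alphaW n ↑k) ∧
          phi n r (lam - alphaW n ↑k) < phi n r lam) ∨
       (¬ inLambda n r (lam - alphaW n ↑k) ∧ inLambda n r (lam + alphaW n ↑k) ∧
          phi n r (lam + alphaW n ↑k) < phi n r lam)) := by
  have hn : 0 < n := Nat.pos_of_ne_zero (NeZero.ne n)
  have h0 := hlam.1
  have hlast : psi n r lam (n-1) = 0 := psi_last n r (le_of_lt hrn) hlam
  have hlastmem : n - 1 ∈ Finset.range n := Finset.mem_range.mpr (by omega)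
  -- some psi is nonzero
  have hex : ∃ i ∈ Finset.range n, psi n r lam i ≠ 0 := by
    by_contra hc
    push_neg at hc
    exact hphi (Finset.sum_eq_zero (fun i hi => by rw [hc i hi]; rfl))
  obtain ⟨i0, hi0r, hi0⟩ := hex
  have himg : ((Finset.range n).image (psi n r lam)).Nonempty :=
    ⟨psi n r lam i0, Finset.mem_image_of_mem _ hi0r⟩
  set M := ((Finset.range n).image (psi n r lam)).max' himg with hMdef
  have hub : ∀ i ∈ Finset.range n, psi n r lam i ≤ M :=
    fun i hi => Finset.le_max' _ _ (Finset.mem_image_of_mem _ hi)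
  set m := ((Finset.range n).image (psi n r lam)).min' himg with hmdef
  have hlb : ∀ i ∈ Finset.range n, m ≤ psi n r lam i :=
    fun i hi => Finset.min'_le _ _ (Finset.mem_image_of_mem _ hi)
  by_cases hM : 0 < M
  · -- Case A: there is a positive psi value
    set S0 := (Finset.range n).filter (fun t => psi n r lam t = M) with hS0def
    have hS0ne : S0.Nonempty := by
      obtain ⟨iM, hiMr, hiM⟩ := Finset.mem_image.mp (Finset.max'_mem _ himg)
      exact ⟨iM, Finset.mem_filter.mpr ⟨hiMr, hiM⟩⟩
    set i1 := S0.min' hS0ne with hi1def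
    have hi1mem := Finset.min'_mem S0 hS0ne
    rw [Finset.mem_filter] at hi1mem
    obtain ⟨hi1r, hi1M⟩ := hi1mem
    rw [← hi1def] at hi1r hi1M
    have hi1n : i1 < n := Finset.mem_range.mp hi1r
    -- lam at i1 is positive
    have hlam_i1 : 0 < lam ↑i1 := by
      rcases Nat.eq_zero_or_pos i1 with hz | hpos
      · have := psi_zero n r lam
        rw [hz] at hi1M
        have hom := om_nonneg n r (0 : ZMod n)
        rw [this] at hi1M
        rw [hz, Nat.cast_zero]
        linarith
      · set j := i1 - 1 with hjdef
        have hjr : j ∈ Finset.range n := Finset.mem_range.mpr (by omega)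
        have hjle : psi n r lam j ≤ M := hub j hjr
        have hjne : psi n r lam j ≠ M := by
          intro he
          have := Finset.min'_le S0 j (Finset.mem_filter.mpr ⟨hjr, he⟩)
          omega
        have hstep : psi n r lam (j+1) = psi n r lam j + (lam ↑(j+1) - om n r ↑(j+1)) :=
          psi_succ n r lam j
        have hj1 : j + 1 = i1 := by omega
        rw [hj1] at hstep
        have hom := om_nonneg n r ((i1:ℕ) : ZMod n)
        rw [hi1M] at hstep
        have : lam ↑i1 = M - psi n r lam j + om n r ↑i1 := by linarith
        rw [this]
        have : psi n r lam j < M := lt_of_le_of_ne hjle hjne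
        linarith
    set S := (Finset.range n).filter (fun t => psi n r lam t = M ∧ 0 < lam ↑t) with hSdef
    have hSne : S.Nonempty := ⟨i1, Finset.mem_filter.mpr ⟨hi1r, hi1M, hlam_i1⟩⟩
    set k := S.max' hSne with hkdef
    have hkmem := Finset.max'_mem S hSne
    rw [Finset.mem_filter] at hkmem
    obtain ⟨hkr, hkM, hlamk⟩ := hkmem
    rw [← hkdef] at hkr hkM hlamk
    have hkn : k < n := Finset.mem_range.mp hkr
    have hk1n : k + 1 < n := by
      have : k ≠ n - 1 := by
        intro he
        rw [he, hlast] at hkM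
        omega
      omega
    have hk1r : k + 1 ∈ Finset.range n := Finset.mem_range.mpr hk1n
    have hlamk1 : lam ↑(k+1) = 0 := by
      rcases eq_or_lt_of_le (hub (k+1) hk1r) with heq | hlt
      · by_contra hne0
        have hpos : 0 < lam ↑(k+1) := lt_of_le_of_ne (h0 _) (Ne.symm hne0)
        have := Finset.le_max' S (k+1) (Finset.mem_filter.mpr ⟨hk1r, heq, hpos⟩)
        omega
      · have hstep : psi n r lam (k+1) = psi n r lam k + (lam ↑(k+1) - om n r ↑(k+1)) :=
          psi_succ n r lam k
        have hom := om_le_one n r ((k+1 : ℕ) : ZMod n)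
        have hge := h0 (((k+1:ℕ)) : ZMod n)
        rw [hkM] at hstep
        have : lam ↑(k+1) ≤ 0 := by linarith
        linarith
    -- assemble
    have hcast : ((k : ZMod n) + 1) = ((k+1 : ℕ) : ZMod n) := cast_succ n k
    have hkk1 : ((k : ZMod n)) ≠ ((k+1 : ℕ) : ZMod n) := by
      simp only [ne_eq, cast_inj_lt n hkn hk1n]; omega
    refine ⟨k, hk1n, ?_, Or.inl ⟨?_, ⟨?_, ?_⟩, ?_⟩⟩
    · rw [hcast, hlamk1]; exact ne_of_gt hlamk
    · rintro ⟨hpos', -⟩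
      have := hpos' ((k:ZMod n) + 1)
      rw [add_alpha_apply, if_neg (by rw [hcast]; exact Ne.symm hkk1), if_pos rfl,
        hcast, hlamk1] at this
      linarith
    · intro x
      rw [sub_alpha_apply]
      by_cases h1 : x = ↑k
      · rw [if_pos h1, if_neg (by rw [h1, hcast]; exact hkk1)]
        subst h1
        linarith
      · rw [if_neg h1]
        have := h0 x
        split_ifs <;> linarith
    · rw [sum_sub_alpha]; exact hlam.2
    · unfold phi
      apply Finset.sum_lt_sum
      · intro i hi
        rw [psi_sub_alpha n r k hk1n lam i (Finset.mem_range.mp hi)]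
        by_cases hik : i = k
        · rw [if_pos hik, hik, hkM]; omega
        · rw [if_neg hik]; omega
      · refine ⟨k, hkr, ?_⟩
        rw [psi_sub_alpha n r k hk1n lam k hkn, if_pos rfl, hkM]
        omega
  · -- Case B: all psi ≤ 0, some negative
    push_neg at hM
    have hm : m < 0 := by
      have h1 := hlb i0 hi0r
      have h2 := hub i0 hi0r
      omega
    set S0 := (Finset.range n).filter (fun t => psi n r lam t = m) with hS0def
    have hS0ne : S0.Nonempty := by
      obtain ⟨im, himr, him⟩ := Finset.mem_image.mp (Finset.min'_mem _ himg)
      exact ⟨im, Finset.mem_filter.mpr ⟨himr, him⟩⟩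
    set i1 := S0.max' hS0ne with hi1def
    have hi1mem := Finset.max'_mem S0 hS0ne
    rw [Finset.mem_filter] at hi1mem
    obtain ⟨hi1r, hi1m⟩ := hi1mem
    rw [← hi1def] at hi1r hi1m
    have hi1n : i1 < n := Finset.mem_range.mp hi1r
    have hi11n : i1 + 1 < n := by
      have : i1 ≠ n - 1 := by
        intro he
        rw [he, hlast] at hi1m
        omega
      omega
    have hi11r : i1 + 1 ∈ Finset.range n := Finset.mem_range.mpr hi11n
    have hlam_i1 : 0 < lam ↑(i1+1) := by
      have hge : m ≤ psi n r lam (i1+1) := hlb _ hi11r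
      have hne : psi n r lam (i1+1) ≠ m := by
        intro he
        have := Finset.le_max' S0 (i1+1) (Finset.mem_filter.mpr ⟨hi11r, he⟩)
        omega
      have hstep : psi n r lam (i1+1) = psi n r lam i1 + (lam ↑(i1+1) - om n r ↑(i1+1)) :=
        psi_succ n r lam i1
      have hom := om_nonneg n r ((i1+1 : ℕ) : ZMod n)
      rw [hi1m] at hstep
      have : m < psi n r lam (i1+1) := lt_of_le_of_ne hge (Ne.symm hne)
      linarith
    set S := (Finset.range n).filter
      (fun t => psi n r lam t = m ∧ t + 1 < n ∧ 0 < lam ↑(t+1)) with hSdef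
    have hSne : S.Nonempty := ⟨i1, Finset.mem_filter.mpr ⟨hi1r, hi1m, hi11n, hlam_i1⟩⟩
    set k := S.min' hSne with hkdef
    have hkmem := Finset.min'_mem S hSne
    rw [Finset.mem_filter] at hkmem
    obtain ⟨hkr, hkm, hk1n, hlamk1⟩ := hkmem
    rw [← hkdef] at hkr hkm hk1n hlamk1
    have hkn : k < n := Finset.mem_range.mp hkr
    have hk1r : k + 1 ∈ Finset.range n := Finset.mem_range.mpr hk1n
    have hlamk0 : lam ↑k = 0 := by
      rcases Nat.eq_zero_or_pos k with hz | hpos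
      · have hpz := psi_zero n r lam
        rw [hz] at hkm
        have hom := om_le_one n r (0 : ZMod n)
        have hge := h0 (0 : ZMod n)
        rw [hpz] at hkm
        rw [hz, Nat.cast_zero]
        linarith
      · set j := k - 1 with hjdef
        have hjr : j ∈ Finset.range n := Finset.mem_range.mpr (by omega)
        have hjge : m ≤ psi n r lam j := hlb j hjr
        have hj1 : j + 1 = k := by omega
        rcases eq_or_lt_of_le hjge with heq | hlt
        · by_contra hne0
          have hpos' : 0 < lam ↑k := lt_of_le_of_ne (h0 _) (Ne.symm hne0)
          have hjS : j ∈ S := Finset.mem_filter.mpr ⟨hjr, heq.symm, by omega, by rw [hj1]; exact hpos'⟩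
          have := Finset.min'_le S j hjS
          omega
        · have hstep : psi n r lam (j+1) = psi n r lam j + (lam ↑(j+1) - om n r ↑(j+1)) :=
            psi_succ n r lam j
          rw [hj1] at hstep
          rw [hkm] at hstep
          have hom := om_le_one n r ((k : ℕ) : ZMod n)
          have hge := h0 (((k:ℕ)) : ZMod n)
          have : lam ↑k ≤ 0 := by linarith
          linarith
    have hcast : ((k : ZMod n) + 1) = ((k+1 : ℕ) : ZMod n) := cast_succ n k
    have hkk1 : ((k : ZMod n)) ≠ ((k+1 : ℕ) : ZMod n) := by
      simp only [ne_eq, cast_inj_lt n hkn hk1n]; omega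
    refine ⟨k, hk1n, ?_, Or.inr ⟨?_, ⟨?_, ?_⟩, ?_⟩⟩
    · rw [hcast, hlamk0]; exact Ne.symm (ne_of_gt hlamk1)
    · rintro ⟨hpos', -⟩
      have := hpos' ((k:ZMod n))
      rw [sub_alpha_apply, if_pos rfl, if_neg (by rw [hcast]; exact hkk1), hlamk0] at this
      linarith
    · intro x
      rw [add_alpha_apply]
      by_cases h2 : x = ↑k + 1
      · rw [if_pos h2, if_neg (by rw [h2, hcast]; exact Ne.symm hkk1)]
        rw [h2, hcast]
        linarith
      · rw [if_neg h2]
        have := h0 x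
        split_ifs <;> linarith
    · rw [sum_add_alpha]; exact hlam.2
    · unfold phi
      apply Finset.sum_lt_sum
      · intro i hi
        rw [psi_add_alpha n r k hk1n lam i (Finset.mem_range.mp hi)]
        by_cases hik : i = k
        · rw [if_pos hik, hik, hkm]; omega
        · rw [if_neg hik]; omega
      · refine ⟨k, hkr, ?_⟩
        rw [psi_add_alpha n r k hk1n lam k hkn, if_pos rfl, hkm]
        omega

end Move

section WSec
variable (n r : ℕ) [NeZero n]

def Wspan : Submodule Kq (Shat n r) :=
  Submodule.span Kq {x : Shat n r | ∃ a b : Shat n r, x = a * oneR n r * b}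

lemma Wspan_mul_mem (a b : Shat n r) {y : Shat n r} (hy : y ∈ Wspan n r) :
    a * y * b ∈ Wspan n r := by
  induction hy using Submodule.span_induction with
  | mem x hx =>
    obtain ⟨c, d, rfl⟩ := hx
    exact Submodule.subset_span ⟨a * c, d * b, by simp [mul_assoc]⟩
  | zero => simp only [mul_zero, zero_mul]; exact (Wspan n r).zero_mem
  | add y z hy hz hy' hz' => rw [mul_add, add_mul]; exact add_mem hy' hz'
  | smul c y hy hy' => rw [mul_smul_comm, smul_mul_assoc]; exact Submodule.smul_mem _ _ hy'

lemma oneR_eq : oneR n r = Ig n r (om n r) := rfl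

lemma Ig_mem_W (hrn : r < n) :
    ∀ N (lam : ZMod n → ℤ), inLambda n r lam → phi n r lam ≤ N →
      Ig n r lam ∈ Wspan n r := by
  have base : ∀ lam : ZMod n → ℤ, inLambda n r lam → phi n r lam = 0 →
      Ig n r lam ∈ Wspan n r := by
    intro lam hlam h0
    have hz : ∀ i ∈ Finset.range n, psi n r lam i = 0 := by
      intro i hi
      have := (Finset.sum_eq_zero_iff.mp h0) i hi
      omega
    have : lam = om n r := eq_om_of_psi_zero n r hz
    rw [this, ← oneR_eq]
    exact Submodule.subset_span ⟨1, 1, by simp⟩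
  intro N
  induction N with
  | zero =>
    intro lam hlam hphi
    exact base lam hlam (Nat.le_zero.mp hphi)
  | succ N ih =>
    intro lam hlam hphiN
    by_cases h0 : phi n r lam = 0
    · exact base lam hlam h0
    · obtain ⟨k, hk1n, hne, hcase⟩ := exists_move n r hrn hlam h0
      rcases hcase with ⟨hout, hin, hlt⟩ | ⟨hout, hin, hlt⟩
      · have hmu : Ig n r (lam - alphaW n ↑k) ∈ Wspan n r := ih _ hin (by omega)
        rw [moveA n r ↑k hlam hne hout]
        apply Submodule.smul_mem
        rw [← mul_assoc]
        exact Wspan_mul_mem n r _ _ hmu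
      · have hmu : Ig n r (lam + alphaW n ↑k) ∈ Wspan n r := ih _ hin (by omega)
        rw [moveB n r ↑k hlam hne hout]
        apply Submodule.smul_mem
        rw [← mul_assoc]
        exact Wspan_mul_mem n r _ _ hmu

lemma one_mem_W (hrn : r < n) : (1 : Shat n r) ∈ Wspan n r := by
  rw [← sum_Ig n r]
  apply Submodule.sum_mem
  intro lam hlm
  exact Ig_mem_W n r hrn (phi n r lam) lam ((mem_LamFinset n r).mp hlm) le_rfl

end WSec

/-- if A is a K-algebra and f : Ŝ(n,r) → A is a surjective K-algebra
homomorphism whose restriction to the subalgebra 1_r·Ŝ(n,r)·1_r is injective, then f is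
injective, hence a K-algebra isomorphism Ŝ(n,r) ≅ A. -/
theorem stmt_17 (n r : ℕ) (hr : 3 ≤ r) (hnr : r < n) [NeZero n]
    (A : Type) [Ring A] [Algebra Kq A]
    (f : Shat n r →ₐ[Kq] A) (hsurj : Function.Surjective ⇑f)
    (hinj : Set.InjOn ⇑f {x : Shat n r | ∃ a : Shat n r, x = oneR n r * a * oneR n r}) :
    Function.Injective ⇑f ∧ Function.Bijective ⇑f := by
  have hker : ∀ z : Shat n r, f z = 0 → z = 0 := by
    intro z hz
    have hzero : ∀ a b : Shat n r, oneR n r * (a * z * b) * oneR n r = 0 := by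
      intro a b
      have h1 : oneR n r * (a * z * b) * oneR n r
          ∈ {x : Shat n r | ∃ a : Shat n r, x = oneR n r * a * oneR n r} := ⟨a * z * b, rfl⟩
      have h2 : (0 : Shat n r)
          ∈ {x : Shat n r | ∃ a : Shat n r, x = oneR n r * a * oneR n r} :=
        ⟨0, by rw [mul_zero, zero_mul]⟩
      apply hinj h1 h2
      simp [map_mul, map_zero, hz]
    have key1 : ∀ v ∈ Wspan n r, ∀ a : Shat n r, oneR n r * (a * z) * v = 0 := by
      intro v hv
      induction hv using Submodule.span_induction with
      | mem x hx =>
        obtain ⟨c, d, rfl⟩ := hx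
        intro a
        have h3 : oneR n r * (a * z) * (c * oneR n r * d)
            = (oneR n r * (a * z * c) * oneR n r) * d := by
          simp [mul_assoc]
        rw [h3, hzero, zero_mul]
      | zero => intro a; rw [mul_zero]
      | add y w hy hw hy' hw' => intro a; rw [mul_add, hy', hw', add_zero]
      | smul c y hy hy' => intro a; rw [mul_smul_comm, hy', smul_zero]
    have key2 : ∀ u ∈ Wspan n r, ∀ v ∈ Wspan n r, u * z * v = 0 := by
      intro u hu
      induction hu using Submodule.span_induction with
      | mem x hx =>
        obtain ⟨a, b, rfl⟩ := hx
        intro v hv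
        have h3 : a * oneR n r * b * z * v = a * (oneR n r * (b * z) * v) := by
          simp [mul_assoc]
        rw [h3, key1 v hv b, mul_zero]
      | zero => intro v hv; rw [zero_mul, zero_mul]
      | add y w hy hw hy' hw' => intro v hv; rw [add_mul, add_mul, hy' v hv, hw' v hv, add_zero]
      | smul c y hy hy' => intro v hv; rw [smul_mul_assoc, smul_mul_assoc, hy' v hv, smul_zero]
    have := key2 1 (one_mem_W n r hnr) 1 (one_mem_W n r hnr)
    rwa [one_mul, mul_one] at this
  have hinj' : Function.Injective ⇑f := by
    intro x y hxy
    have : f (x - y) = 0 := by rw [map_sub, hxy, sub_self]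
    exact sub_eq_zero.mp (hker _ this)
  exact ⟨hinj', hinj', hsurj⟩
end
end
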